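/- arXiv:2605.01103 — 2 statements merged into one kernel-verified Lean document; each statement's English description precedes it below -/
import Mathlib

section
/- (Projection theorem, part (i).) Let ħ > 0 and S ∈ Sp(2n,ℝ), and let X = Π_X(S(B^{2n}(√ħ))) ⊆ ℝⁿ_x and P = Π_P(S(B^{2n}(√ħ))) ⊆ ℝⁿ_p be the orthogonal projections of the quantum blob S(B^{2n}(√ħ)) onto the x-space and the p-space. Then (X, P) is a quantum polar pair: X^ħ ⊆ P. -/
/-!
Pairing `p` with the `x`-part of `S z` is pairing `z` with `q = Sᵀ (p, 0)`, so `p ∈ X^ℏ` says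
that `q ⬝ z ≤ ℏ` on the ball of radius `√ℏ`; testing this on the multiple of `q` on the sphere
gives `|q|² ≤ ℏ`. Since `J` is orthogonal, `z = -J q` lies in the ball as well, and
`S J Sᵀ = J` gives `S z = -J (p, 0) = (0, p)`, whose `p`-part is `p`.
-/

open Matrix

noncomputable section

/-- The `ℏ`-polar dual of a set `X ⊆ ℝⁿ`. -/
def polarDual (ℏ : ℝ) {n : ℕ} (X : Set (Fin n → ℝ)) : Set (Fin n → ℝ) :=
  {p | ∀ x ∈ X, p ⬝ᵥ x ≤ ℏ}

/-- The standard symplectic matrix `J = [[0, I],[-I, 0]]` on `ℝⁿ × ℝⁿ`. -/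
def stdJ (n : ℕ) : Matrix (Fin n ⊕ Fin n) (Fin n ⊕ Fin n) ℝ :=
  Matrix.fromBlocks 0 1 (-1) 0

/-- `S ∈ Sp(2n, ℝ)` iff `Sᵀ J S = J`. -/
def IsSymplectic {n : ℕ} (S : Matrix (Fin n ⊕ Fin n) (Fin n ⊕ Fin n) ℝ) : Prop :=
  Sᵀ * stdJ n * S = stdJ n

/-- The closed ball of radius `r` centered at `0` in phase space `ℝⁿ × ℝⁿ`. -/
def ballPhase (n : ℕ) (r : ℝ) : Set ((Fin n ⊕ Fin n) → ℝ) :=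
  {z | ∑ i, z i ^ 2 ≤ r ^ 2}

lemma stdJ_eq_neg_J (n : ℕ) : stdJ n = -J (Fin n) ℝ := by
  simp [stdJ, J, fromBlocks_neg]

lemma isSymplectic_iff_mem_symplecticGroup {n : ℕ}
    {S : Matrix (Fin n ⊕ Fin n) (Fin n ⊕ Fin n) ℝ} :
    IsSymplectic S ↔ S ∈ symplecticGroup (Fin n) ℝ := by
  simp [IsSymplectic, SymplecticGroup.mem_iff', stdJ_eq_neg_J]

lemma IsSymplectic.mul_stdJ_mul_transpose {n : ℕ}
    {S : Matrix (Fin n ⊕ Fin n) (Fin n ⊕ Fin n) ℝ} (hS : IsSymplectic S) :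
    S * stdJ n * Sᵀ = stdJ n := by
  have := SymplecticGroup.mem_iff.mp (isSymplectic_iff_mem_symplecticGroup.mp hS)
  simp [stdJ_eq_neg_J, this]

lemma stdJ_mulVec_sumElim {n : ℕ} (x p : Fin n → ℝ) :
    stdJ n *ᵥ Sum.elim x p = Sum.elim p (-x) := by
  simp [stdJ, fromBlocks_mulVec, neg_mulVec]

lemma sum_sq_stdJ_mulVec {n : ℕ} (z : Fin n ⊕ Fin n → ℝ) :
    ∑ i, (stdJ n *ᵥ z) i ^ 2 = ∑ i, z i ^ 2 := by
  rw [← Sum.elim_comp_inl_inr z, stdJ_mulVec_sumElim]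
  simp [Fintype.sum_sum_type, add_comm]

lemma sumElim_zero_dotProduct {m n α : Type*} [Fintype m] [Fintype n]
    [NonUnitalNonAssocSemiring α] (p : m → α) (z : m ⊕ n → α) :
    Sum.elim p 0 ⬝ᵥ z = p ⬝ᵥ (z ∘ Sum.inl) := by
  simp [dotProduct, Fintype.sum_sum_type]

lemma sum_sq_le_of_forall_dotProduct_le {ι : Type*} [Fintype ι] {ℏ : ℝ} (hℏ : 0 < ℏ)
    {q : ι → ℝ} (h : ∀ w : ι → ℝ, ∑ i, w i ^ 2 ≤ ℏ → q ⬝ᵥ w ≤ ℏ) :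
    ∑ i, q i ^ 2 ≤ ℏ := by
  set t := ∑ i, q i ^ 2
  by_contra! hlt
  -- test on `√(ℏ/t) • q`, which lies on the sphere; `√c > c` for `0 < c < 1`
  have ht : 0 < t := hℏ.trans hlt
  set c := ℏ / t
  have hc : 0 < c := div_pos hℏ ht
  have hc1 : c < 1 := (div_lt_one ht).mpr hlt
  have hsq : c < √c := (Real.lt_sqrt hc.le).mpr (by nlinarith)
  have hball : ∑ i, (√c • q) i ^ 2 = c * t := by
    simp only [Pi.smul_apply, smul_eq_mul, mul_pow, Real.sq_sqrt hc.le, ← Finset.mul_sum,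
      t]
  have hdot : q ⬝ᵥ (√c • q) = √c * t := by
    simp only [dotProduct, Pi.smul_apply, smul_eq_mul, t, Finset.mul_sum]
    exact Finset.sum_congr rfl fun i _ => by ring
  have hct : c * t = ℏ := div_mul_cancel₀ ℏ ht.ne'
  have := h (√c • q) (hball.trans hct).le
  nlinarith

/-- Projection theorem, part (i): the orthogonal projections `X` and `P` of a quantum
blob `S(B^{2n}(√ℏ))` on the `x`- and `p`-spaces form a quantum polar pair: `X^ℏ ⊆ P`. -/
theorem statement10 (n : ℕ) (ℏ : ℝ) (hℏ : 0 < ℏ)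
    (S : Matrix (Fin n ⊕ Fin n) (Fin n ⊕ Fin n) ℝ) (hS : IsSymplectic S) :
    polarDual ℏ ((fun z => z ∘ Sum.inl) '' (S.mulVec '' ballPhase n (Real.sqrt ℏ)))
      ⊆ (fun z => z ∘ Sum.inr) '' (S.mulVec '' ballPhase n (Real.sqrt ℏ)) := by
  intro p hp
  have mem_ball {w} : w ∈ ballPhase n √ℏ ↔ ∑ i, w i ^ 2 ≤ ℏ := by
    rw [ballPhase, Set.mem_ofPred_eq, Real.sq_sqrt hℏ.le]
  set q := Sᵀ *ᵥ Sum.elim p 0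
  have hq : ∑ i, q i ^ 2 ≤ ℏ := by
    refine sum_sq_le_of_forall_dotProduct_le hℏ fun w hw => ?_
    calc q ⬝ᵥ w = Sum.elim p 0 ⬝ᵥ S *ᵥ w := by rw [dotProduct_mulVec, ← mulVec_transpose]
      _ = p ⬝ᵥ ((S *ᵥ w) ∘ Sum.inl) := sumElim_zero_dotProduct p _
      _ ≤ ℏ := hp _ ⟨_, ⟨w, mem_ball.mpr hw, rfl⟩, rfl⟩
  refine ⟨S *ᵥ -(stdJ n *ᵥ q), ⟨_, mem_ball.mpr ?_, rfl⟩, ?_⟩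
  · simpa only [Pi.neg_apply, neg_sq, sum_sq_stdJ_mulVec] using hq
  · rw [mulVec_neg, mulVec_mulVec, mulVec_mulVec, hS.mul_stdJ_mul_transpose,
      stdJ_mulVec_sumElim]
    ext i
    simp
end
end

section
/- Let ħ > 0 and let A be a real symmetric positive definite n×n matrix. Set X = {x ∈ ℝⁿ : Ax·x ≤ ħ}, so X^ħ = {p ∈ ℝⁿ : A⁻¹p·p ≤ ħ}. Then the ellipsoid Ω = {(x,p) ∈ ℝ^{2n} : Ax·x + A⁻¹p·p ≤ ħ} equals D(B^{2n}(√ħ)) for the symplectic matrix D = [[A^{−1/2}, 0],[0, A^{1/2}]], hence is a quantum blob; it is contained in X × X^ħ with Π_X Ω = X and Π_P Ω = X^ħ; and it is the unique quantum blob contained in X × X^ħ: if S ∈ Sp(2n,ℝ) satisfies S(B^{2n}(√ħ)) ⊆ X × X^ħ, then S(B^{2n}(√ħ)) = Ω. -/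
open Matrix

noncomputable section

/-!
Write `⟪M⟫ z = M z · z`. The ellipsoid `Ω` is `{⟪diag(A, A⁻¹)⟫ ≤ ℏ}` and any `S(B(√ℏ))` is
`{⟪S⁻ᵀS⁻¹⟫ ≤ ℏ}`; for `S = diag(A^{-1/2}, A^{1/2})` these matrices agree. Expanding
`⟪A⟫ (x - A⁻¹ p) ≥ 0` gives `2 x · p ≤ ⟪A⟫ x + ⟪A⁻¹⟫ p`, which computes the polar dual.

For uniqueness let `M = S⁻ᵀS⁻¹`. By homogeneity, `S(B(√ℏ)) ⊆ X × X^ℏ` means `⟪M⟫ ≥ ⟪A⟫ ∘ Π_X`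
and `⟪M⟫ ≥ ⟪A⁻¹⟫ ∘ Π_P`. As `S` is symplectic, `M⁻¹ = SSᵀ = J M Jᵀ`, so also
`⟪M⁻¹⟫ ≥ ⟪A⁻¹⟫ ∘ Π_X` and `⟪M⁻¹⟫ ≥ ⟪A⟫ ∘ Π_P`. For `z = (x, 0)` and `y = Π_X (M⁻¹ z)` these
bounds give `⟪A⟫ y ≤ ⟪M⁻¹⟫ z = y · x` and `⟪A⁻¹⟫ x ≤ y · x`, so the inequality above is an
equality; then `M⁻¹ - diag(A⁻¹, 0) ≥ 0` vanishes at `z`, i.e. `M⁻¹ z = (A⁻¹ x, 0)`.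
Together with the same argument on `P`, `M⁻¹ = diag(A⁻¹, A)`.
-/

namespace Matrix

variable {m ι : Type*}

lemma IsHermitian.transpose_eq {A : Matrix m m ℝ} (hA : A.IsHermitian) : Aᵀ = A := by
  rw [← conjTranspose_eq_transpose_of_trivial]
  exact hA

variable [Fintype m] [Fintype ι]

lemma IsHermitian.mulVec_dotProduct_comm {A : Matrix m m ℝ} (hA : A.IsHermitian) (u v : m → ℝ) :
    A *ᵥ u ⬝ᵥ v = A *ᵥ v ⬝ᵥ u := by
  rw [dotProduct_comm, dotProduct_mulVec, ← vecMul_transpose, hA.transpose_eq]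

lemma PosSemidef.mulVec_dotProduct_self_nonneg {A : Matrix m m ℝ} (hA : A.PosSemidef)
    (x : m → ℝ) : 0 ≤ A *ᵥ x ⬝ᵥ x := by
  simpa [dotProduct_comm] using hA.dotProduct_mulVec_nonneg x

lemma PosSemidef.mulVec_eq_zero_of_dotProduct_eq_zero {A : Matrix m m ℝ} (hA : A.PosSemidef)
    {x : m → ℝ} (hx : A *ᵥ x ⬝ᵥ x = 0) : A *ᵥ x = 0 :=
  (hA.dotProduct_mulVec_zero_iff x).1 (by simpa [dotProduct_comm] using hx)

lemma mulVec_smul_dotProduct_smul (A : Matrix m m ℝ) (c : ℝ) (x : m → ℝ) :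
    A *ᵥ (c • x) ⬝ᵥ (c • x) = c ^ 2 * (A *ᵥ x ⬝ᵥ x) := by
  simp only [mulVec_smul, smul_dotProduct, dotProduct_smul, smul_eq_mul]
  ring

lemma transpose_mul_mul_mulVec_dotProduct {α : Type*} [CommSemiring α] (B : Matrix m m α)
    (π : Matrix m ι α) (v : ι → α) : (πᵀ * B * π) *ᵥ v ⬝ᵥ v = B *ᵥ (π *ᵥ v) ⬝ᵥ π *ᵥ v := by
  rw [← mulVec_mulVec, ← mulVec_mulVec, dotProduct_comm, dotProduct_transpose_mulVec]

lemma PosDef.mulVec_dotProduct_self_pos {A : Matrix m m ℝ} (hA : A.PosDef) {x : m → ℝ}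
    (hx : x ≠ 0) : 0 < A *ᵥ x ⬝ᵥ x := by
  simpa [dotProduct_comm] using hA.dotProduct_mulVec_pos hx

lemma fromBlocks_zero_mulVec_dotProduct (P Q : Matrix m m ℝ) (w : m ⊕ m → ℝ) :
    fromBlocks P 0 0 Q *ᵥ w ⬝ᵥ w
      = P *ᵥ (w ∘ Sum.inl) ⬝ᵥ (w ∘ Sum.inl) + Q *ᵥ (w ∘ Sum.inr) ⬝ᵥ (w ∘ Sum.inr) := by
  rw [← sumElim_dotProduct_sumElim, Sum.elim_comp_inl_inr, fromBlocks_mulVec]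
  simp

variable [DecidableEq m]

lemma PosDef.mulVec_inv_mulVec {A : Matrix m m ℝ} (hA : A.PosDef) (v : m → ℝ) :
    A *ᵥ (A⁻¹ *ᵥ v) = v := by
  rw [mulVec_mulVec, mul_nonsing_inv A hA.det_pos.ne'.isUnit, one_mulVec]

lemma PosDef.two_mul_dotProduct_le {A : Matrix m m ℝ} (hA : A.PosDef) (u v : m → ℝ) :
    2 * (u ⬝ᵥ v) ≤ A *ᵥ u ⬝ᵥ u + A⁻¹ *ᵥ v ⬝ᵥ v := by
  have h := hA.posSemidef.mulVec_dotProduct_self_nonneg (u - A⁻¹ *ᵥ v)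
  have hcross : A *ᵥ u ⬝ᵥ A⁻¹ *ᵥ v = u ⬝ᵥ v := by
    rw [hA.isHermitian.mulVec_dotProduct_comm, hA.mulVec_inv_mulVec, dotProduct_comm]
  rw [mulVec_sub, hA.mulVec_inv_mulVec, sub_dotProduct, dotProduct_sub, dotProduct_sub, hcross,
    dotProduct_comm v u, dotProduct_comm v (A⁻¹ *ᵥ v)] at h
  linarith

lemma mul_transpose_eq_of_le [DecidableEq ι] {π : Matrix m ι ℝ} (hπ : π * πᵀ = 1)
    {M N : Matrix ι ι ℝ} (hMN : M * N = 1) (hN : N.IsHermitian) {A : Matrix m m ℝ} (hA : A.PosDef)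
    (hM_le : ∀ w, A *ᵥ (π *ᵥ w) ⬝ᵥ π *ᵥ w ≤ M *ᵥ w ⬝ᵥ w)
    (hN_le : ∀ z, A⁻¹ *ᵥ (π *ᵥ z) ⬝ᵥ π *ᵥ z ≤ N *ᵥ z ⬝ᵥ z) :
    N * πᵀ = πᵀ * A⁻¹ := by
  refine ext_iff_mulVec.2 fun x => ?_
  set z := πᵀ *ᵥ x
  have hz : π *ᵥ z = x := by rw [mulVec_mulVec, hπ, one_mulVec]
  have hNz : N *ᵥ z ⬝ᵥ z = π *ᵥ (N *ᵥ z) ⬝ᵥ x := by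
    rw [dotProduct_mulVec, vecMul_transpose]
  have hx : A⁻¹ *ᵥ x ⬝ᵥ x ≤ N *ᵥ z ⬝ᵥ z := hz ▸ hN_le z
  have hy : A *ᵥ (π *ᵥ (N *ᵥ z)) ⬝ᵥ π *ᵥ (N *ᵥ z) ≤ N *ᵥ z ⬝ᵥ z := by
    simpa only [mulVec_mulVec, hMN, one_mulVec, dotProduct_comm z] using hM_le (N *ᵥ z)
  have hyx := hA.two_mul_dotProduct_le (π *ᵥ (N *ᵥ z)) x
  have hG : (N - πᵀ * A⁻¹ * π).PosSemidef := by
    refine PosSemidef.of_dotProduct_mulVec_nonneg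
      (hN.sub (by simpa using isHermitian_conjTranspose_mul_mul π hA.inv.isHermitian)) fun v => ?_
    have := hN_le v
    rw [star_trivial, dotProduct_comm, sub_mulVec, sub_dotProduct,
      transpose_mul_mul_mulVec_dotProduct]
    linarith
  have hGz : (N - πᵀ * A⁻¹ * π) *ᵥ z ⬝ᵥ z = 0 := by
    rw [sub_mulVec, sub_dotProduct, transpose_mul_mul_mulVec_dotProduct, hz]
    linarith
  have hGz' := hG.mulVec_eq_zero_of_dotProduct_eq_zero hGz
  rw [sub_mulVec, sub_eq_zero, ← mulVec_mulVec, hz] at hGz'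
  rw [← mulVec_mulVec, hGz']

lemma posDef_transpose_inv_mul_inv {S : Matrix m m ℝ} (hS : IsUnit S.det) :
    (S⁻¹ᵀ * S⁻¹).PosDef := by
  simpa using PosDef.conjTranspose_mul_self S⁻¹
    (mulVec_injective_iff_isUnit.2 ((isUnit_iff_isUnit_det _).2 (isUnit_nonsing_inv_det S hS)))

lemma eq_fromBlocks_of_le {M N : Matrix (m ⊕ m) (m ⊕ m) ℝ} (hMN : M * N = 1)
    (hN : N.IsHermitian) {A : Matrix m m ℝ} (hA : A.PosDef)
    (hMx : ∀ w, A *ᵥ (w ∘ Sum.inl) ⬝ᵥ (w ∘ Sum.inl) ≤ M *ᵥ w ⬝ᵥ w)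
    (hMp : ∀ w, A⁻¹ *ᵥ (w ∘ Sum.inr) ⬝ᵥ (w ∘ Sum.inr) ≤ M *ᵥ w ⬝ᵥ w)
    (hNx : ∀ z, A⁻¹ *ᵥ (z ∘ Sum.inl) ⬝ᵥ (z ∘ Sum.inl) ≤ N *ᵥ z ⬝ᵥ z)
    (hNp : ∀ z, A *ᵥ (z ∘ Sum.inr) ⬝ᵥ (z ∘ Sum.inr) ≤ N *ᵥ z ⬝ᵥ z) :
    M = fromBlocks A 0 0 A⁻¹ := by
  have hAdet : IsUnit A.det := hA.det_pos.ne'.isUnit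
  have hπx (w : m ⊕ m → ℝ) : (fromCols 1 0 : Matrix m (m ⊕ m) ℝ) *ᵥ w = w ∘ Sum.inl := by
    simp [fromCols_mulVec]
  have hπp (w : m ⊕ m → ℝ) : (fromCols 0 1 : Matrix m (m ⊕ m) ℝ) *ᵥ w = w ∘ Sum.inr := by
    simp [fromCols_mulVec]
  have hNx' := mul_transpose_eq_of_le (π := fromCols 1 0)
    (by simp [transpose_fromCols, fromCols_mul_fromRows]) hMN hN hA
    (fun w => by simpa only [hπx] using hMx w) (fun z => by simpa only [hπx] using hNx z)
  have hNp' := mul_transpose_eq_of_le (π := fromCols 0 1)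
    (by simp [transpose_fromCols, fromCols_mul_fromRows]) hMN hN hA.inv
    (fun w => by simpa only [hπp] using hMp w)
    (fun z => by simpa only [hπp, nonsing_inv_nonsing_inv A hAdet] using hNp z)
  have hN_eq : N = fromBlocks A⁻¹ 0 0 A := by
    simp only [transpose_fromCols, transpose_one, transpose_zero, fromRows_mul, Matrix.one_mul,
      Matrix.zero_mul, nonsing_inv_nonsing_inv A hAdet] at hNx' hNp'
    rw [← Matrix.mul_one N, ← fromBlocks_one, ← fromCols_fromRows_eq_fromBlocks, mul_fromCols,
      hNx', hNp', fromCols_fromRows_eq_fromBlocks]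
  calc M = M * (N * fromBlocks A 0 0 A⁻¹) := by
        simp [hN_eq, fromBlocks_multiply, nonsing_inv_mul A hAdet, mul_nonsing_inv A hAdet]
    _ = fromBlocks A 0 0 A⁻¹ := by rw [← Matrix.mul_assoc, hMN, Matrix.one_mul]

end Matrix

lemma le_of_sublevel_subset {V : Type*} [AddCommGroup V] [Module ℝ V] {f g : V → ℝ}
    (hf : ∀ (c : ℝ) w, f (c • w) = c ^ 2 * f w) (hg : ∀ (c : ℝ) w, g (c • w) = c ^ 2 * g w)
    (hg_pos : ∀ w, w ≠ 0 → 0 < g w) {h : ℝ} (hh : 0 < h)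
    (hfg : {w | g w ≤ h} ⊆ {w | f w ≤ h}) (w : V) : f w ≤ g w := by
  rcases eq_or_ne w 0 with rfl | hw
  · have hf0 : f 0 = 0 := by simpa using hf 0 0
    have hg0 : g 0 = 0 := by simpa using hg 0 0
    rw [hf0, hg0]
  set c := √(h / g w)
  have hgw := hg_pos w hw
  have hc : c ^ 2 * g w = h := by
    rw [Real.sq_sqrt (by positivity), div_mul_cancel₀ _ hgw.ne']
  have hcw : f (c • w) ≤ h := hfg (show g (c • w) ≤ h by rw [hg, hc])
  rw [hf, ← hc] at hcw
  exact le_of_mul_le_mul_left hcw (by positivity)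

section Projections

variable {α β : Type*} {c : ℝ}

lemma image_comp_inl_setOf_add_le {f : (α → ℝ) → ℝ} {g : (β → ℝ) → ℝ} (hg : ∀ y, 0 ≤ g y)
    (hg0 : g 0 = 0) :
    (fun z : α ⊕ β → ℝ => z ∘ Sum.inl) '' {z | f (z ∘ Sum.inl) + g (z ∘ Sum.inr) ≤ c}
      = {x | f x ≤ c} := by
  ext x
  refine ⟨?_, fun hx => ⟨Sum.elim x 0, by simpa [hg0] using hx, Sum.elim_comp_inl _ _⟩⟩
  rintro ⟨z, hz, rfl⟩
  change f (z ∘ Sum.inl) ≤ c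
  linarith [hg (z ∘ Sum.inr), show f (z ∘ Sum.inl) + g (z ∘ Sum.inr) ≤ c from hz]

lemma image_comp_inr_setOf_add_le {f : (α → ℝ) → ℝ} {g : (β → ℝ) → ℝ} (hf : ∀ x, 0 ≤ f x)
    (hf0 : f 0 = 0) :
    (fun z : α ⊕ β → ℝ => z ∘ Sum.inr) '' {z | f (z ∘ Sum.inl) + g (z ∘ Sum.inr) ≤ c}
      = {y | g y ≤ c} := by
  ext y
  refine ⟨?_, fun hy => ⟨Sum.elim 0 y, by simpa [hf0] using hy, Sum.elim_comp_inr _ _⟩⟩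
  rintro ⟨z, hz, rfl⟩
  change g (z ∘ Sum.inr) ≤ c
  linarith [hf (z ∘ Sum.inl), show f (z ∘ Sum.inl) + g (z ∘ Sum.inr) ≤ c from hz]

end Projections

section Symplectic

variable {n : ℕ}

lemma stdJ_mul_transpose : stdJ n * (stdJ n)ᵀ = 1 := by
  simp [stdJ, fromBlocks_transpose, fromBlocks_multiply, fromBlocks_one]

lemma transpose_stdJ_mul : (stdJ n)ᵀ * stdJ n = 1 := by
  simp [stdJ, fromBlocks_transpose, fromBlocks_multiply, fromBlocks_one]

lemma transpose_stdJ_mulVec (z : Fin n ⊕ Fin n → ℝ) :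
    (stdJ n)ᵀ *ᵥ z = Sum.elim (-(z ∘ Sum.inr)) (z ∘ Sum.inl) := by
  simp [stdJ, fromBlocks_transpose, fromBlocks_mulVec, neg_mulVec]

lemma isSymplectic_fromBlocks_zero {P Q : Matrix (Fin n) (Fin n) ℝ} (h : Pᵀ * Q = 1) :
    IsSymplectic (fromBlocks P 0 0 Q) := by
  have h' : Qᵀ * P = 1 := by simpa using congrArg transpose h
  simp [IsSymplectic, stdJ, fromBlocks_transpose, fromBlocks_multiply, h, h']

variable {S : Matrix (Fin n ⊕ Fin n) (Fin n ⊕ Fin n) ℝ}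

lemma IsSymplectic.transpose_stdJ_mul_transpose_mul_stdJ_mul_self (hS : IsSymplectic S) :
    (stdJ n)ᵀ * Sᵀ * stdJ n * S = 1 := by
  rw [Matrix.mul_assoc, Matrix.mul_assoc, ← Matrix.mul_assoc Sᵀ, hS, transpose_stdJ_mul]

lemma IsSymplectic.inv_eq (hS : IsSymplectic S) : S⁻¹ = (stdJ n)ᵀ * Sᵀ * stdJ n :=
  inv_eq_left_inv hS.transpose_stdJ_mul_transpose_mul_stdJ_mul_self

lemma IsSymplectic.isUnit_det (hS : IsSymplectic S) : IsUnit S.det :=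
  isUnit_det_of_left_inverse hS.transpose_stdJ_mul_transpose_mul_stdJ_mul_self

lemma IsSymplectic.mul_transpose_eq (hS : IsSymplectic S) :
    S * Sᵀ = stdJ n * (S⁻¹ᵀ * S⁻¹) * (stdJ n)ᵀ := by
  simp only [hS.inv_eq, transpose_mul, transpose_transpose, Matrix.mul_assoc, stdJ_mul_transpose,
    Matrix.mul_one]
  simp only [← Matrix.mul_assoc, stdJ_mul_transpose, Matrix.one_mul]

end Symplectic

section Ellipsoid

variable {n : ℕ}

lemma ballPhase_eq (r : ℝ) : ballPhase n r = {z | z ⬝ᵥ z ≤ r ^ 2} := by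
  ext z
  simp [ballPhase, dotProduct, sq]

lemma image_mulVec_ballPhase {S : Matrix (Fin n ⊕ Fin n) (Fin n ⊕ Fin n) ℝ} (hS : IsUnit S.det)
    (r : ℝ) : S.mulVec '' ballPhase n r = {w | (S⁻¹ᵀ * S⁻¹) *ᵥ w ⬝ᵥ w ≤ r ^ 2} := by
  rw [Set.image_eq_preimage_of_inverse (g := S⁻¹.mulVec)
    (fun z => by rw [mulVec_mulVec, nonsing_inv_mul S hS, one_mulVec])
    (fun w => by rw [mulVec_mulVec, mul_nonsing_inv S hS, one_mulVec]), ballPhase_eq]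
  ext w
  simp only [Set.mem_preimage, Set.mem_ofPred_eq]
  rw [← mulVec_mulVec, dotProduct_comm (S⁻¹ᵀ *ᵥ _), dotProduct_transpose_mulVec]

lemma image_fromBlocks_inv_mulVec_ballPhase {B : Matrix (Fin n) (Fin n) ℝ} (hB : B.PosDef)
    (r : ℝ) : (fromBlocks B⁻¹ 0 0 B).mulVec '' ballPhase n r
      = {z | fromBlocks (B * B) 0 0 (B * B)⁻¹ *ᵥ z ⬝ᵥ z ≤ r ^ 2} := by
  have hBdet : IsUnit B.det := hB.det_pos.ne'.isUnit
  have hleft : fromBlocks B 0 0 B⁻¹ * fromBlocks B⁻¹ 0 0 B = 1 := by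
    simp [fromBlocks_multiply, nonsing_inv_mul B hBdet, mul_nonsing_inv B hBdet]
  rw [image_mulVec_ballPhase (isUnit_det_of_left_inverse hleft), inv_eq_left_inv hleft]
  simp [fromBlocks_transpose, fromBlocks_multiply, transpose_nonsing_inv,
    hB.isHermitian.transpose_eq, Matrix.mul_inv_rev]

end Ellipsoid

lemma polarDual_setOf_mulVec_dotProduct_le {n : ℕ} {ℏ : ℝ} (hℏ : 0 < ℏ)
    {A : Matrix (Fin n) (Fin n) ℝ} (hA : A.PosDef) :
    polarDual ℏ {x | A *ᵥ x ⬝ᵥ x ≤ ℏ} = {p | A⁻¹ *ᵥ p ⬝ᵥ p ≤ ℏ} := by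
  ext p
  refine ⟨fun hp => ?_, fun hp x hx => ?_⟩
  · change A⁻¹ *ᵥ p ⬝ᵥ p ≤ ℏ
    set q := A⁻¹ *ᵥ p ⬝ᵥ p
    by_contra! hq
    have hq0 : 0 < q := hℏ.trans hq
    set c := √(ℏ / q)
    have hc : c ^ 2 * q = ℏ := by
      rw [Real.sq_sqrt (div_pos hℏ hq0).le, div_mul_cancel₀ _ hq0.ne']
    have hpq : p ⬝ᵥ A⁻¹ *ᵥ p = q := dotProduct_comm _ _
    have hx : A *ᵥ (c • A⁻¹ *ᵥ p) ⬝ᵥ (c • A⁻¹ *ᵥ p) = ℏ := by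
      rw [mulVec_smul_dotProduct_smul, hA.mulVec_inv_mulVec, hpq, hc]
    have hpx := hp _ hx.le
    rw [dotProduct_smul, hpq, smul_eq_mul] at hpx
    have hcq : ℏ * q ≤ ℏ * ℏ := by
      nlinarith [mul_self_le_mul_self (mul_nonneg (Real.sqrt_nonneg (ℏ / q)) hq0.le) hpx]
    exact (le_of_mul_le_mul_left hcq hℏ).not_gt hq
  · have := hA.two_mul_dotProduct_le x p
    rw [dotProduct_comm x] at this
    linarith [show A *ᵥ x ⬝ᵥ x ≤ ℏ from hx, show A⁻¹ *ᵥ p ⬝ᵥ p ≤ ℏ from hp]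

theorem IsSymplectic.image_ballPhase_eq_of_subset {n : ℕ} {ℏ : ℝ} (hℏ : 0 < ℏ)
    {A : Matrix (Fin n) (Fin n) ℝ} (hA : A.PosDef) {S : Matrix (Fin n ⊕ Fin n) (Fin n ⊕ Fin n) ℝ}
    (hS : IsSymplectic S)
    (hsub : S.mulVec '' ballPhase n √ℏ ⊆ {z | A *ᵥ (z ∘ Sum.inl) ⬝ᵥ (z ∘ Sum.inl) ≤ ℏ
      ∧ A⁻¹ *ᵥ (z ∘ Sum.inr) ⬝ᵥ (z ∘ Sum.inr) ≤ ℏ}) :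
    S.mulVec '' ballPhase n √ℏ = {z | fromBlocks A 0 0 A⁻¹ *ᵥ z ⬝ᵥ z ≤ ℏ} := by
  set M := S⁻¹ᵀ * S⁻¹
  have hball : S.mulVec '' ballPhase n √ℏ = {w | M *ᵥ w ⬝ᵥ w ≤ ℏ} := by
    rw [image_mulVec_ballPhase hS.isUnit_det, Real.sq_sqrt hℏ.le]
  have hM := posDef_transpose_inv_mul_inv hS.isUnit_det
  have hMx : ∀ w, A *ᵥ (w ∘ Sum.inl) ⬝ᵥ (w ∘ Sum.inl) ≤ M *ᵥ w ⬝ᵥ w :=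
    le_of_sublevel_subset (fun c w => mulVec_smul_dotProduct_smul A c (w ∘ Sum.inl))
      (mulVec_smul_dotProduct_smul M) (fun _ => hM.mulVec_dotProduct_self_pos) hℏ
      (hball ▸ hsub.trans fun _ hz => hz.1)
  have hMp : ∀ w, A⁻¹ *ᵥ (w ∘ Sum.inr) ⬝ᵥ (w ∘ Sum.inr) ≤ M *ᵥ w ⬝ᵥ w :=
    le_of_sublevel_subset (fun c w => mulVec_smul_dotProduct_smul A⁻¹ c (w ∘ Sum.inr))
      (mulVec_smul_dotProduct_smul M) (fun _ => hM.mulVec_dotProduct_self_pos) hℏ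
      (hball ▸ hsub.trans fun _ hz => hz.2)
  have hN (z) : (S * Sᵀ) *ᵥ z ⬝ᵥ z = M *ᵥ ((stdJ n)ᵀ *ᵥ z) ⬝ᵥ (stdJ n)ᵀ *ᵥ z := by
    simpa [hS.mul_transpose_eq] using transpose_mul_mul_mulVec_dotProduct M (stdJ n)ᵀ z
  have hMN : M * (S * Sᵀ) = 1 := by
    rw [Matrix.mul_assoc, ← Matrix.mul_assoc S⁻¹, nonsing_inv_mul S hS.isUnit_det,
      Matrix.one_mul, ← transpose_mul, mul_nonsing_inv S hS.isUnit_det, transpose_one]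
  rw [hball, eq_fromBlocks_of_le hMN (by simpa using isHermitian_mul_conjTranspose_self S) hA
    hMx hMp (fun z => by simpa [hN, transpose_stdJ_mulVec] using hMp ((stdJ n)ᵀ *ᵥ z))
    (fun z => by simpa [hN, transpose_stdJ_mulVec, mulVec_neg] using hMx ((stdJ n)ᵀ *ᵥ z))]

/-- For `A` symmetric positive definite, `X = {x : Ax·x ≤ ℏ}` has
`X^ℏ = {p : A⁻¹p·p ≤ ℏ}`; the ellipsoid `Ω = {(x,p) : Ax·x + A⁻¹p·p ≤ ℏ}` is
`D(B^{2n}(√ℏ))` for the symplectic matrix `D = [[A^{-1/2},0],[0,A^{1/2}]]` (hence a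
quantum blob), is contained in `X × X^ℏ`, projects onto `X` and `X^ℏ`, and is the unique
quantum blob contained in `X × X^ℏ`. -/
theorem statement15 (n : ℕ) (ℏ : ℝ) (hℏ : 0 < ℏ)
    (A : Matrix (Fin n) (Fin n) ℝ) (hA : A.PosDef) :
    polarDual ℏ {x : Fin n → ℝ | A.mulVec x ⬝ᵥ x ≤ ℏ}
        = {p : Fin n → ℝ | A⁻¹.mulVec p ⬝ᵥ p ≤ ℏ} ∧
    (∀ Asq : Matrix (Fin n) (Fin n) ℝ, Asq.PosDef → Asq * Asq = A →
      IsSymplectic (Matrix.fromBlocks Asq⁻¹ 0 0 Asq) ∧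
      {z : (Fin n ⊕ Fin n) → ℝ |
          A.mulVec (z ∘ Sum.inl) ⬝ᵥ (z ∘ Sum.inl)
            + A⁻¹.mulVec (z ∘ Sum.inr) ⬝ᵥ (z ∘ Sum.inr) ≤ ℏ}
        = (Matrix.fromBlocks Asq⁻¹ 0 0 Asq).mulVec '' ballPhase n (Real.sqrt ℏ)) ∧
    {z : (Fin n ⊕ Fin n) → ℝ |
        A.mulVec (z ∘ Sum.inl) ⬝ᵥ (z ∘ Sum.inl)
          + A⁻¹.mulVec (z ∘ Sum.inr) ⬝ᵥ (z ∘ Sum.inr) ≤ ℏ}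
      ⊆ {z | A.mulVec (z ∘ Sum.inl) ⬝ᵥ (z ∘ Sum.inl) ≤ ℏ
              ∧ A⁻¹.mulVec (z ∘ Sum.inr) ⬝ᵥ (z ∘ Sum.inr) ≤ ℏ} ∧
    (fun z : (Fin n ⊕ Fin n) → ℝ => z ∘ Sum.inl) ''
        {z : (Fin n ⊕ Fin n) → ℝ |
          A.mulVec (z ∘ Sum.inl) ⬝ᵥ (z ∘ Sum.inl)
            + A⁻¹.mulVec (z ∘ Sum.inr) ⬝ᵥ (z ∘ Sum.inr) ≤ ℏ}
      = {x : Fin n → ℝ | A.mulVec x ⬝ᵥ x ≤ ℏ} ∧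
    (fun z : (Fin n ⊕ Fin n) → ℝ => z ∘ Sum.inr) ''
        {z : (Fin n ⊕ Fin n) → ℝ |
          A.mulVec (z ∘ Sum.inl) ⬝ᵥ (z ∘ Sum.inl)
            + A⁻¹.mulVec (z ∘ Sum.inr) ⬝ᵥ (z ∘ Sum.inr) ≤ ℏ}
      = {p : Fin n → ℝ | A⁻¹.mulVec p ⬝ᵥ p ≤ ℏ} ∧
    (∀ S : Matrix (Fin n ⊕ Fin n) (Fin n ⊕ Fin n) ℝ, IsSymplectic S →
      S.mulVec '' ballPhase n (Real.sqrt ℏ)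
          ⊆ {z | A.mulVec (z ∘ Sum.inl) ⬝ᵥ (z ∘ Sum.inl) ≤ ℏ
                  ∧ A⁻¹.mulVec (z ∘ Sum.inr) ⬝ᵥ (z ∘ Sum.inr) ≤ ℏ} →
      S.mulVec '' ballPhase n (Real.sqrt ℏ)
        = {z : (Fin n ⊕ Fin n) → ℝ |
            A.mulVec (z ∘ Sum.inl) ⬝ᵥ (z ∘ Sum.inl)
              + A⁻¹.mulVec (z ∘ Sum.inr) ⬝ᵥ (z ∘ Sum.inr) ≤ ℏ}) := by
  have hA_nonneg := hA.posSemidef.mulVec_dotProduct_self_nonneg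
  have hAinv_nonneg := hA.inv.posSemidef.mulVec_dotProduct_self_nonneg
  have hΩ : {z : (Fin n ⊕ Fin n) → ℝ | A *ᵥ (z ∘ Sum.inl) ⬝ᵥ (z ∘ Sum.inl)
      + A⁻¹ *ᵥ (z ∘ Sum.inr) ⬝ᵥ (z ∘ Sum.inr) ≤ ℏ} = {z | fromBlocks A 0 0 A⁻¹ *ᵥ z ⬝ᵥ z ≤ ℏ} := by
    simp only [fromBlocks_zero_mulVec_dotProduct]
  refine ⟨polarDual_setOf_mulVec_dotProduct_le hℏ hA, fun Asq hAsq hAsqA => ⟨?_, ?_⟩,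
    fun z hz => ⟨?_, ?_⟩,
    image_comp_inl_setOf_add_le (f := fun x => A *ᵥ x ⬝ᵥ x) hAinv_nonneg (by simp),
    image_comp_inr_setOf_add_le (g := fun p => A⁻¹ *ᵥ p ⬝ᵥ p) hA_nonneg (by simp),
    fun S hS hsub => (hS.image_ballPhase_eq_of_subset hℏ hA hsub).trans hΩ.symm⟩
  · exact isSymplectic_fromBlocks_zero <| by
      rw [transpose_nonsing_inv, hAsq.isHermitian.transpose_eq,
        nonsing_inv_mul Asq hAsq.det_pos.ne'.isUnit]
  · rw [hΩ, image_fromBlocks_inv_mulVec_ballPhase hAsq, hAsqA, Real.sq_sqrt hℏ.le]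
  · linarith [hAinv_nonneg (z ∘ Sum.inr), show _ ≤ ℏ from hz]
  · linarith [hA_nonneg (z ∘ Sum.inl), show _ ≤ ℏ from hz]
end
end
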